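/- Let B be a bialgebra over a commutative ring R and let v, w : B → R be ε-derivations. Then the commutator [id ⋆ v, id ⋆ w] = (id ⋆ v) ∘ (id ⋆ w) − (id ⋆ w) ∘ (id ⋆ v) of the associated left-invariant derivations equals id ⋆ u, where u = ε ∘ [id ⋆ v, id ⋆ w], and u is again an ε-derivation of B. Hence the space of ε-derivations B → R inherits a Lie bracket [v, w] := ε ∘ [id ⋆ v, id ⋆ w] making it a Lie algebra (the 'tangent Lie algebra at the unit'). -/

import Mathlib

open TensorProduct

section

variable {R B : Type*} [CommRing R] [Ring B] [Bialgebra R B]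

/-- An `ε`-derivation of `B` valued in `R`: `v(fg) = v(f)ε(g) + ε(f)v(g)`. -/
def IsEpsDerivation (v : B →ₗ[R] R) : Prop :=
  ∀ f g : B, v (f * g) = v f * Coalgebra.counit g + Coalgebra.counit f * v g

/-- The left translation `id ⋆ v = μ ∘ (id ⊗ v) ∘ Δ` (using `B ⊗ R ≃ B`). -/
noncomputable def leftTranslation (v : B →ₗ[R] R) : B →ₗ[R] B :=
  (TensorProduct.rid R B).toLinearMap ∘ₗ
    TensorProduct.map LinearMap.id v ∘ₗ Coalgebra.comul

/-- The induced bracket on `ε`-derivations: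
`[v, w] := ε ∘ (id ⋆ v ∘ id ⋆ w − id ⋆ w ∘ id ⋆ v)`. -/
noncomputable def epsBracket (v w : B →ₗ[R] R) : B →ₗ[R] R :=
  Coalgebra.counit ∘ₗ
    (leftTranslation v ∘ₗ leftTranslation w - leftTranslation w ∘ₗ leftTranslation v)

open Coalgebra LinearMap

lemma leftTranslation_def (v : B →ₗ[R] R) :
    leftTranslation v = (TensorProduct.rid R B).toLinearMap ∘ₗ v.lTensor B ∘ₗ comul := rfl

/-- `id ⋆ v` is left invariant. -/
lemma leftInvariant (v : B →ₗ[R] R) :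
    comul ∘ₗ leftTranslation v = (leftTranslation v).lTensor B ∘ₗ (comul (R := R)) := by
  have h1 : (comul (R := R) (A := B)) ∘ₗ (TensorProduct.rid R B).toLinearMap =
      (TensorProduct.rid R (B ⊗[R] B)).toLinearMap ∘ₗ (comul (R := R)).rTensor R := by
    apply TensorProduct.ext'
    intro x r
    simp [TensorProduct.rid_tmul]
  have h2 : ((comul (R := R) (A := B)).rTensor R) ∘ₗ v.lTensor B =
      v.lTensor (B ⊗[R] B) ∘ₗ (comul (R := R)).rTensor B := by
    rw [rTensor_comp_lTensor, lTensor_comp_rTensor]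
  have h3' : (TensorProduct.rid R (B ⊗[R] B)).toLinearMap ∘ₗ v.lTensor (B ⊗[R] B) =
      (((TensorProduct.rid R B).toLinearMap).lTensor B ∘ₗ (v.lTensor B).lTensor B) ∘ₗ
        (TensorProduct.assoc R B B B).toLinearMap := by
    apply TensorProduct.ext_threefold
    intro x y z
    simp [TensorProduct.rid_tmul, TensorProduct.smul_tmul']
  have h3 : (TensorProduct.rid R (B ⊗[R] B)).toLinearMap ∘ₗ v.lTensor (B ⊗[R] B) ∘ₗ
        (TensorProduct.assoc R B B B).symm.toLinearMap =
      ((TensorProduct.rid R B).toLinearMap).lTensor B ∘ₗ (v.lTensor B).lTensor B := by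
    rw [← comp_assoc, h3', comp_assoc, LinearEquiv.comp_coe,
      LinearEquiv.symm_trans_self, LinearEquiv.refl_toLinearMap, comp_id]
  calc comul ∘ₗ leftTranslation v
      = ((comul (R := R) (A := B)) ∘ₗ (TensorProduct.rid R B).toLinearMap) ∘ₗ
        v.lTensor B ∘ₗ comul := by rw [leftTranslation_def]; rfl
    _ = (TensorProduct.rid R (B ⊗[R] B)).toLinearMap ∘ₗ v.lTensor (B ⊗[R] B) ∘ₗ
        ((comul (R := R)).rTensor B ∘ₗ comul) := by
        rw [h1]; rw [comp_assoc]; congr 1; rw [← comp_assoc, h2, comp_assoc]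
    _ = (TensorProduct.rid R (B ⊗[R] B)).toLinearMap ∘ₗ v.lTensor (B ⊗[R] B) ∘ₗ
        ((TensorProduct.assoc R B B B).symm.toLinearMap ∘ₗ
          (comul (R := R)).lTensor B ∘ₗ comul) := by
        rw [Coalgebra.coassoc_symm]
    _ = (((TensorProduct.rid R B).toLinearMap).lTensor B ∘ₗ (v.lTensor B).lTensor B) ∘ₗ
        (comul (R := R)).lTensor B ∘ₗ comul := by
        rw [← h3]; simp only [comp_assoc]
    _ = (leftTranslation v).lTensor B ∘ₗ comul := by
        rw [leftTranslation_def, lTensor_comp, lTensor_comp]; simp only [comp_assoc]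

lemma counit_comp_comul_rid :
    (TensorProduct.rid R B).toLinearMap ∘ₗ (counit (R := R)).lTensor B ∘ₗ comul
      = LinearMap.id (M := B) := by
  ext b
  simp

/-- Reconstruction of a left-invariant map. -/
lemma reconstruct {X : B →ₗ[R] B}
    (h : comul ∘ₗ X = X.lTensor B ∘ₗ (comul (R := R))) :
    leftTranslation (counit ∘ₗ X) = X := by
  apply LinearMap.ext
  intro b
  have hb : comul (X b) = X.lTensor B (comul b) := LinearMap.congr_fun h b
  simp only [leftTranslation_def, lTensor_comp, coe_comp, LinearEquiv.coe_coe,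
    Function.comp_apply, ← hb, Coalgebra.lTensor_counit_comul, TensorProduct.rid_tmul,
    one_smul]

lemma bracket_eq (v w : B →ₗ[R] R) :
    leftTranslation v ∘ₗ leftTranslation w - leftTranslation w ∘ₗ leftTranslation v =
      leftTranslation (epsBracket v w) := by
  have hcomp : ∀ (X Y : B →ₗ[R] B), comul ∘ₗ X = X.lTensor B ∘ₗ (comul (R := R)) →
      comul ∘ₗ Y = Y.lTensor B ∘ₗ (comul (R := R)) →
      comul ∘ₗ (X ∘ₗ Y) = (X ∘ₗ Y).lTensor B ∘ₗ (comul (R := R)) := by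
    intro X Y hX hY
    rw [← comp_assoc, hX, comp_assoc, hY, lTensor_comp, comp_assoc]
  have h : comul ∘ₗ (leftTranslation v ∘ₗ leftTranslation w -
        leftTranslation w ∘ₗ leftTranslation v) =
      (leftTranslation v ∘ₗ leftTranslation w -
        leftTranslation w ∘ₗ leftTranslation v).lTensor B ∘ₗ (comul (R := R)) := by
    rw [comp_sub, lTensor_sub, sub_comp,
      hcomp _ _ (leftInvariant v) (leftInvariant w),
      hcomp _ _ (leftInvariant w) (leftInvariant v)]
  exact (reconstruct h).symm

lemma leftTranslation_deriv {v : B →ₗ[R] R} (hv : IsEpsDerivation v) (f g : B) :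
    leftTranslation v (f * g) = leftTranslation v f * g + f * leftTranslation v g := by
  set D : B ⊗[R] B →ₗ[R] B :=
    (TensorProduct.rid R B).toLinearMap ∘ₗ v.lTensor B with hD
  set E : B ⊗[R] B →ₗ[R] B :=
    (TensorProduct.rid R B).toLinearMap ∘ₗ (counit (R := R)).lTensor B with hE
  have key : ∀ t s : B ⊗[R] B, D (t * s) = D t * E s + E t * D s := by
    intro t s
    induction t using TensorProduct.induction_on with
    | zero => simp
    | tmul x y =>
      induction s using TensorProduct.induction_on with
      | zero => simp
      | tmul x' y' =>
        simp only [hD, hE, Algebra.TensorProduct.tmul_mul_tmul, coe_comp,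
          Function.comp_apply, lTensor_tmul, LinearEquiv.coe_coe,
          TensorProduct.rid_tmul, hv y y']
        rw [add_smul, smul_mul_smul_comm, smul_mul_smul_comm]
      | add s1 s2 h1 h2 => simp only [mul_add, map_add, h1, h2]; abel
    | add t1 t2 h1 h2 => simp only [add_mul, map_add, h1, h2]; abel
  have hE' : ∀ b : B, E (comul b) = b := by
    intro b; simp [hE]
  have hmul : (comul (R := R) (A := B)) (f * g) = comul f * comul g :=
    Bialgebra.comul_mul f g
  have : leftTranslation v (f * g) = D (comul f * comul g) := by
    rw [leftTranslation_def]; simp [hD, hmul]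
  rw [this, key, hE', hE']
  rfl

lemma counit_leftTranslation_mul {v w : B →ₗ[R] R}
    (hv : IsEpsDerivation v) (hw : IsEpsDerivation w) :
    IsEpsDerivation (epsBracket v w) := by
  intro f g
  have hZ : ∀ f g : B,
      (leftTranslation v ∘ₗ leftTranslation w - leftTranslation w ∘ₗ leftTranslation v)
        (f * g) =
      (leftTranslation v ∘ₗ leftTranslation w - leftTranslation w ∘ₗ leftTranslation v) f * g
        + f * (leftTranslation v ∘ₗ leftTranslation w -
            leftTranslation w ∘ₗ leftTranslation v) g := by
    intro f g
    simp only [LinearMap.sub_apply, coe_comp, Function.comp_apply,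
      leftTranslation_deriv hw f g, map_add, leftTranslation_deriv hv,
      leftTranslation_deriv hv f g, leftTranslation_deriv hw, sub_mul, mul_sub]
    abel
  simp only [epsBracket, coe_comp, Function.comp_apply, hZ f g, map_add,
    Bialgebra.counit_mul]

/-- The commutator of the left-invariant derivations associated to two
`ε`-derivations `v, w` is again of the form `id ⋆ u`, with `u = ε ∘ [id ⋆ v, id ⋆ w]` an
`ε`-derivation; hence the `ε`-derivations form a Lie algebra under
`[v, w] = ε ∘ [id ⋆ v, id ⋆ w]` (the tangent Lie algebra at the unit). -/
theorem epsDerivations_form_lie_algebra :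
    (∀ v w : B →ₗ[R] R, IsEpsDerivation v → IsEpsDerivation w →
        IsEpsDerivation (epsBracket v w) ∧
          leftTranslation v ∘ₗ leftTranslation w - leftTranslation w ∘ₗ leftTranslation v =
            leftTranslation (epsBracket v w)) ∧
    (∀ v : B →ₗ[R] R, IsEpsDerivation v → epsBracket v v = 0) ∧
    (∀ u v w : B →ₗ[R] R, IsEpsDerivation u → IsEpsDerivation v → IsEpsDerivation w →
        epsBracket (epsBracket u v) w + epsBracket (epsBracket v w) u +
          epsBracket (epsBracket w u) v = 0) := by
  refine ⟨fun v w hv hw => ⟨counit_leftTranslation_mul hv hw, bracket_eq v w⟩, ?_, ?_⟩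
  · intro v _
    simp [epsBracket]
  · intro u v w _ _ _
    have key : ∀ a b : B →ₗ[R] R, epsBracket a b =
        counit ∘ₗ (leftTranslation a ∘ₗ leftTranslation b -
          leftTranslation b ∘ₗ leftTranslation a) := fun _ _ => rfl
    rw [key (epsBracket u v) w, key (epsBracket v w) u, key (epsBracket w u) v,
      ← bracket_eq u v, ← bracket_eq v w, ← bracket_eq w u,
      ← comp_add, ← comp_add]
    set X := leftTranslation u
    set Y := leftTranslation v
    set Z := leftTranslation w
    have hS : ((X ∘ₗ Y - Y ∘ₗ X) ∘ₗ Z - Z ∘ₗ (X ∘ₗ Y - Y ∘ₗ X)) +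
        ((Y ∘ₗ Z - Z ∘ₗ Y) ∘ₗ X - X ∘ₗ (Y ∘ₗ Z - Z ∘ₗ Y)) +
        ((Z ∘ₗ X - X ∘ₗ Z) ∘ₗ Y - Y ∘ₗ (Z ∘ₗ X - X ∘ₗ Z)) = (0 : B →ₗ[R] B) := by
      simp only [sub_comp, comp_sub, comp_assoc]
      abel
    rw [hS, comp_zero]

end
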